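/- In the boundary dynamical system on the edge z=0 with initial data p_0 = (x_0, y_0, 0), x_0 ∈ (0,1), and q_0 = (a_0, b_0, c_0) ∈ Σ, the sequence p_n converges to some p* = (x*, 1-x*, 0) with x* ∈ (0,1), and q_{2n} → q_[p*] - (2c_0 - 1)e₋₁(p*), q_{2n+1} → q_[p*] + (2c_0 - 1)e₋₁(p*), where q_[p*] = (1/2)(𝟏 - p*) and e₋₁((x,y,0)) = (1/2)(y, x, -1). -/

import Mathlib

open Matrix Filter

noncomputable def Mb (x : ℝ) : Matrix (Fin 3) (Fin 3) ℝ :=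
  !![0, 0, 1 - x; 0, 0, x; 1, 1, 0]

def inSimplex (v : Fin 3 → ℝ) : Prop := (∀ i, 0 ≤ v i) ∧ v 0 + v 1 + v 2 = 1

/-!
Since `M_p` preserves coordinate sums, `c_{n+1} = 1 - c_n`: the third coordinate alternates between
`c_0` and `1 - c_0`, and `q_{n+1}` is determined by `x_n` and `c_n`. The recursion for `x` then reads
`x_{n+2} - x_{n+1} = ρ c_n (x_n - x_{n+1})`, so each step moves back by a fraction `ρ c_n ≤ ρ < 1` of
the previous one. The increments decay geometrically and every `x_n` lies between `x_0` and `x_1`,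
so `x_n` converges to a point of `(0,1)`; the limits of `q` along even and odd times follow by
continuity.
-/

open Topology

section ContractingDifferences

variable {u t : ℕ → ℝ}

theorem mem_uIcc_of_contracting (ht : ∀ n, t n ∈ Set.Icc 0 1)
    (hu : ∀ n, u (n + 2) - u (n + 1) = t n * (u n - u (n + 1))) (n : ℕ) :
    u n ∈ Set.uIcc (u 0) (u 1) := by
  suffices h : ∀ n, u n ∈ Set.uIcc (u 0) (u 1) ∧ u (n + 1) ∈ Set.uIcc (u 0) (u 1) from (h n).1
  intro n
  induction n with
  | zero => exact ⟨Set.left_mem_uIcc, Set.right_mem_uIcc⟩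
  | succ n ih =>
    refine ⟨ih.2, ?_⟩
    have h := (convex_uIcc (u 0) (u 1)).add_smul_sub_mem ih.2 ih.1 (ht n)
    rwa [smul_eq_mul, ← hu, add_sub_cancel] at h

theorem abs_sub_succ_le_geometric_of_contracting {r : ℝ} (ht : ∀ n, t n ∈ Set.Icc 0 r)
    (hu : ∀ n, u (n + 2) - u (n + 1) = t n * (u n - u (n + 1))) (n : ℕ) :
    |u (n + 1) - u n| ≤ |u 1 - u 0| * r ^ n := by
  induction n with
  | zero => simp
  | succ n ih =>
    obtain ⟨ht0, htr⟩ := ht n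
    calc |u (n + 2) - u (n + 1)| = t n * |u (n + 1) - u n| := by
          rw [hu, abs_mul, abs_of_nonneg ht0, abs_sub_comm]
      _ ≤ r * (|u 1 - u 0| * r ^ n) := mul_le_mul htr ih (abs_nonneg _) (ht0.trans htr)
      _ = |u 1 - u 0| * r ^ (n + 1) := by ring

theorem exists_tendsto_mem_uIcc_of_contracting {r : ℝ} (hr : r < 1)
    (ht : ∀ n, t n ∈ Set.Icc 0 r)
    (hu : ∀ n, u (n + 2) - u (n + 1) = t n * (u n - u (n + 1))) :
    ∃ l ∈ Set.uIcc (u 0) (u 1), Tendsto u atTop (𝓝 l) := by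
  have hcauchy : CauchySeq u := cauchySeq_of_le_geometric r |u 1 - u 0| hr fun n => by
    rw [Real.dist_eq, abs_sub_comm]
    exact abs_sub_succ_le_geometric_of_contracting ht hu n
  obtain ⟨l, hl⟩ := cauchySeq_tendsto_of_complete hcauchy
  have ht1 : ∀ n, t n ∈ Set.Icc 0 1 := fun n => ⟨(ht n).1, (ht n).2.trans hr.le⟩
  exact ⟨l, isClosed_Icc.mem_of_tendsto hl
    (Eventually.of_forall (mem_uIcc_of_contracting ht1 hu)), hl⟩

end ContractingDifferences

/-- `M_p q` for `p = (y, 1 - y, 0)` and `q ∈ Σ` with third coordinate `c`. -/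
noncomputable def edgeImage (y c : ℝ) : Fin 3 → ℝ := ![(1 - y) * c, y * c, 1 - c]

theorem continuous_edgeImage (c : ℝ) : Continuous fun y => edgeImage y c := by
  unfold edgeImage
  fun_prop

/-- The right-hand side is `q_[p] + (2c - 1) e₋₁(p)` in coordinates. -/
theorem edgeImage_eq_add (y c : ℝ) :
    edgeImage y c = ![(1 - y) / 2 + (2 * c - 1) * ((1 - y) / 2), y / 2 + (2 * c - 1) * (y / 2),
      1 / 2 + (2 * c - 1) * (-(1 / 2))] := by
  ext i
  fin_cases i <;> simp [edgeImage] <;> ring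

theorem edgeImage_one_sub_eq_sub (y c : ℝ) :
    edgeImage y (1 - c) = ![(1 - y) / 2 - (2 * c - 1) * ((1 - y) / 2),
      y / 2 - (2 * c - 1) * (y / 2), 1 / 2 - (2 * c - 1) * (-(1 / 2))] := by
  ext i
  fin_cases i <;> simp [edgeImage] <;> ring

theorem mulVec_Mb_of_sum_eq_one {v : Fin 3 → ℝ} (hv : v 0 + v 1 + v 2 = 1) (y : ℝ) :
    Mb y *ᵥ v = edgeImage y (v 2) := by
  ext i
  fin_cases i <;> simp [Mb, edgeImage, mulVec, dotProduct, Fin.sum_univ_three]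
  linarith

section BoundaryOrbit

variable {x : ℕ → ℝ} {q : ℕ → Fin 3 → ℝ}

theorem orbit_succ_eq (hq0 : q 0 0 + q 0 1 + q 0 2 = 1)
    (hq : ∀ n, q (n + 1) = Mb (x n) *ᵥ q n) :
    ∀ n, q (n + 1) = edgeImage (x n) (q n 2) := by
  suffices hsum : ∀ n, q n 0 + q n 1 + q n 2 = 1 from
    fun n => (hq n).trans (mulVec_Mb_of_sum_eq_one (hsum n) _)
  intro n
  induction n with
  | zero => exact hq0
  | succ n ih => simp [hq n, mulVec_Mb_of_sum_eq_one ih, edgeImage]; ring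

theorem orbit_third_succ (hs : ∀ n, q (n + 1) = edgeImage (x n) (q n 2)) (n : ℕ) :
    q (n + 1) 2 = 1 - q n 2 := by
  simp [hs n, edgeImage]

theorem orbit_third_two_mul (hs : ∀ n, q (n + 1) = edgeImage (x n) (q n 2)) (n : ℕ) :
    q (2 * n) 2 = q 0 2 := by
  induction n with
  | zero => rfl
  | succ n ih =>
    rw [mul_add, mul_one, orbit_third_succ hs, orbit_third_succ hs, ih, sub_sub_cancel]

theorem orbit_third_mem_Icc (hs : ∀ n, q (n + 1) = edgeImage (x n) (q n 2))
    (hc : q 0 2 ∈ Set.Icc 0 1) (n : ℕ) : q n 2 ∈ Set.Icc 0 1 := by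
  obtain ⟨k, rfl | rfl⟩ := Nat.even_or_odd' n
  · rwa [orbit_third_two_mul hs]
  · rw [orbit_third_succ hs, orbit_third_two_mul hs]
    exact ⟨sub_nonneg.2 hc.2, sub_le_self _ hc.1⟩

variable {ρ : ℝ}

theorem orbit_x_sub_succ (hs : ∀ n, q (n + 1) = edgeImage (x n) (q n 2))
    (hx : ∀ n, x (n + 1) = (1 - ρ) * x n + ρ * (1 - q n 0 - q (n + 1) 0)) (n : ℕ) :
    x (n + 2) - x (n + 1) = ρ * q n 2 * (x n - x (n + 1)) := by
  have hq1 : q (n + 1) 0 = (1 - x n) * q n 2 := by simp [hs n, edgeImage]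
  have hq2 : q (n + 2) 0 = (1 - x (n + 1)) * (1 - q n 2) := by
    simp [hs (n + 1), orbit_third_succ hs n, edgeImage]
  rw [hx (n + 1), hq1, hq2]
  ring

theorem orbit_x_one_mem_Ioo (hρ0 : 0 ≤ ρ) (hρ1 : ρ < 1)
    (hs : ∀ n, q (n + 1) = edgeImage (x n) (q n 2))
    (hx : ∀ n, x (n + 1) = (1 - ρ) * x n + ρ * (1 - q n 0 - q (n + 1) 0))
    (hx0 : x 0 ∈ Set.Ioo 0 1) (hq0 : inSimplex (q 0)) : x 1 ∈ Set.Ioo 0 1 := by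
  obtain ⟨hnonneg, hsum⟩ := hq0
  have hq1 : q 1 0 = (1 - x 0) * q 0 2 := by simp [hs 0, edgeImage]
  have hlo : 0 ≤ 1 - q 0 0 - q 1 0 := by
    rw [hq1]; nlinarith [hnonneg 1, hnonneg 2, hx0.1, hsum]
  have hhi : 1 - q 0 0 - q 1 0 ≤ 1 := by
    rw [hq1]; nlinarith [hnonneg 0, hnonneg 2, hx0.2]
  rw [hx 0]
  constructor <;> nlinarith [hx0.1, hx0.2]

end BoundaryOrbit

/-- In the boundary dynamical system on the edge `z = 0` with initial data
`p_0 = (x_0, 1-x_0, 0)`, `x_0 ∈ (0,1)`, `q_0 = (a_0,b_0,c_0) ∈ Σ`, the sequence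
`p_n = (x_n, 1-x_n, 0)` converges to some `p* = (x*, 1-x*, 0)` with `x* ∈ (0,1)`, and
`q_{2n} → q_[p*] - (2c_0-1)e₋₁(p*)`, `q_{2n+1} → q_[p*] + (2c_0-1)e₋₁(p*)`, where
`q_[p*] = ((1-x*)/2, x*/2, 1/2)` and `e₋₁(p*) = ((1-x*)/2, x*/2, -1/2)`. -/
theorem stmt12 (ρ : ℝ) (hρ : ρ ∈ Set.Ioo (0 : ℝ) 1)
    (x : ℕ → ℝ) (q : ℕ → Fin 3 → ℝ)
    (hx0 : x 0 ∈ Set.Ioo (0 : ℝ) 1) (hq0 : inSimplex (q 0))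
    (hq : ∀ n, q (n + 1) = (Mb (x n)).mulVec (q n))
    (hx : ∀ n, x (n + 1) = (1 - ρ) * x n + ρ * (1 - q n 0 - q (n + 1) 0)) :
    ∃ xs : ℝ, xs ∈ Set.Ioo (0 : ℝ) 1 ∧
      Tendsto (fun n => (![x n, 1 - x n, 0] : Fin 3 → ℝ)) atTop
        (nhds ![xs, 1 - xs, 0]) ∧
      Tendsto (fun n => q (2 * n)) atTop
        (nhds ![(1 - xs) / 2 - (2 * q 0 2 - 1) * ((1 - xs) / 2),
                xs / 2 - (2 * q 0 2 - 1) * (xs / 2),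
                1 / 2 - (2 * q 0 2 - 1) * (-(1 / 2))]) ∧
      Tendsto (fun n => q (2 * n + 1)) atTop
        (nhds ![(1 - xs) / 2 + (2 * q 0 2 - 1) * ((1 - xs) / 2),
                xs / 2 + (2 * q 0 2 - 1) * (xs / 2),
                1 / 2 + (2 * q 0 2 - 1) * (-(1 / 2))]) := by
  have hs := orbit_succ_eq hq0.2 hq
  have hc : q 0 2 ∈ Set.Icc 0 1 := ⟨hq0.1 2, by linarith [hq0.1 0, hq0.1 1, hq0.2]⟩
  have hcontr (n : ℕ) : ρ * q n 2 ∈ Set.Icc 0 ρ :=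
    have hcn := orbit_third_mem_Icc hs hc n
    ⟨mul_nonneg hρ.1.le hcn.1, mul_le_of_le_one_right hρ.1.le hcn.2⟩
  obtain ⟨xs, hxs_mem, hxs⟩ :=
    exists_tendsto_mem_uIcc_of_contracting hρ.2 hcontr (orbit_x_sub_succ hs hx)
  have hxs01 : xs ∈ Set.Ioo 0 1 :=
    Set.ordConnected_Ioo.uIcc_subset hx0 (orbit_x_one_mem_Ioo hρ.1.le hρ.2 hs hx hx0 hq0) hxs_mem
  have h2 : Tendsto (fun n : ℕ => 2 * n) atTop atTop :=
    (strictMono_mul_left_of_pos two_pos).tendsto_atTop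
  have hxe : Tendsto (fun n => x (2 * n)) atTop (𝓝 xs) := hxs.comp h2
  have hxo : Tendsto (fun n => x (2 * n + 1)) atTop (𝓝 xs) :=
    ((tendsto_add_atTop_iff_nat 1).2 hxs).comp h2
  have hp : Continuous fun y : ℝ => ![y, 1 - y, 0] := by fun_prop
  refine ⟨xs, hxs01, (hp.tendsto xs).comp hxs, ?_, ?_⟩
  · rw [← edgeImage_one_sub_eq_sub, ← tendsto_add_atTop_iff_nat 1]
    refine (((continuous_edgeImage _).tendsto xs).comp hxo).congr fun n => ?_
    simp only [Function.comp, mul_add, mul_one, hs (2 * n + 1), orbit_third_succ hs,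
      orbit_third_two_mul hs]
  · rw [← edgeImage_eq_add]
    refine (((continuous_edgeImage _).tendsto xs).comp hxe).congr fun n => ?_
    simp only [Function.comp, hs (2 * n), orbit_third_two_mul hs]
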